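/- arXiv:2401.11712 — 5 statements merged into one kernel-verified Lean document; each statement's English description precedes it below -/
import Mathlib

section
/- For every positive integer s, the (1+1)-ENAS algorithm with one-bit mutation and initial bound s finds an optimal architecture of the UNIFORM problem (i.e., reaches a state of fitness 1) in expected runtime E[T] ≤ 63n/4. -/
/-!
Additive drift, with the deficit `d(x) = (n/2 - n_A)⁺ + (n/4 - n_B)⁺ + (n/4 - n_C)⁺` as
potential. The fitness is a strictly increasing function of the pair `(i(x), j(x))` for the
product order, and every single mutation either does not increase `d` or makes `(i, j)` strictly
worse, so elitist selection never increases `d`. When `d(x) > 0`, with probability `1/9` the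
mutation adds a block of a missing type, which does not lower `(i, j)` and lowers `d` by one;
hence the expected deficit drops by at least `1/9` per step. As `d = 0` forces fitness `1` and
`d ≤ n`, the additive drift theorem gives `E[T] ≤ 9n ≤ 63n/4`.
-/

namespace ENAS

open scoped ENNReal

/-- A neural architecture: the numbers of A-, B- and C-type blocks. -/
abbrev State := ℕ × ℕ × ℕ

/-- The number of B/C-type blocks contributing to the fitness. -/
def iVal (n : ℕ) (x : State) : ℕ := min x.2.1 (n / 4) + min x.2.2 (n / 4)

/-- The number of A/B-type blocks contributing to the fitness minus the number of
B-type blocks negatively affecting the fitness (evaluated in `ℤ`). -/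
def jVal (n : ℕ) (x : State) : ℤ :=
  min (x.1 : ℤ) ((n : ℤ) / 2) + min (x.2.1 : ℤ) ((n : ℤ) / 4) -
    max 0 (min ((x.2.1 : ℤ) - (n : ℤ) / 4) ((n : ℤ) / 4 - (x.2.2 : ℤ)))

/-- The fitness (classification accuracy) of an architecture on `UNIFORM`. -/
noncomputable def fitness (n : ℕ) (x : State) : ℝ :=
  (1 / Real.pi) *
    (((n : ℝ) / 2 + (iVal n x : ℝ)) * ((1 / 2) * Real.sin (2 * Real.pi / n)) +
      ((n : ℝ) / 4 + (jVal n x : ℝ)) *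
        (Real.pi / n - (1 / 2) * Real.sin (2 * Real.pi / n)))

/-- The elementary mutation actions.  Seeds `0`–`11` (two seeds per action) give the
six probability-`1/9` actions (add A/B/C, remove A/B/C, where removal of an absent
block leaves the state unchanged, as does truncated subtraction on `ℕ`); seeds
`12`–`17` give the six probability-`1/18` modification actions. -/
def applyAction (k : Fin 18) (x : State) : State :=
  match (k : ℕ), x with
  | 0, (na, nb, nc) => (na + 1, nb, nc)
  | 1, (na, nb, nc) => (na + 1, nb, nc)
  | 2, (na, nb, nc) => (na, nb + 1, nc)
  | 3, (na, nb, nc) => (na, nb + 1, nc)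
  | 4, (na, nb, nc) => (na, nb, nc + 1)
  | 5, (na, nb, nc) => (na, nb, nc + 1)
  | 6, (na, nb, nc) => (na - 1, nb, nc)
  | 7, (na, nb, nc) => (na - 1, nb, nc)
  | 8, (na, nb, nc) => (na, nb - 1, nc)
  | 9, (na, nb, nc) => (na, nb - 1, nc)
  | 10, (na, nb, nc) => (na, nb, nc - 1)
  | 11, (na, nb, nc) => (na, nb, nc - 1)
  | 12, (na, nb, nc) => if 0 < na then (na - 1, nb + 1, nc) else (na, nb, nc)
  | 13, (na, nb, nc) => if 0 < na then (na - 1, nb, nc + 1) else (na, nb, nc)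
  | 14, (na, nb, nc) => if 0 < nb then (na + 1, nb - 1, nc) else (na, nb, nc)
  | 15, (na, nb, nc) => if 0 < nb then (na, nb - 1, nc + 1) else (na, nb, nc)
  | 16, (na, nb, nc) => if 0 < nc then (na + 1, nb, nc - 1) else (na, nb, nc)
  | _, (na, nb, nc) => if 0 < nc then (na, nb + 1, nc - 1) else (na, nb, nc)

/-- The one-bit mutation operator, as a probability distribution on offspring. -/
noncomputable def mutate (x : State) : PMF State :=
  (PMF.uniformOfFintype (Fin 18)).map (fun k => applyAction k x)

/-- Elitist selection: keep the offspring `y` iff `f(y) ≥ f(x)`. -/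
noncomputable def select (n : ℕ) (x y : State) : State :=
  if fitness n x ≤ fitness n y then y else x

/-- One generation of the (1+1)-ENAS algorithm with one-bit mutation. -/
noncomputable def stepOneBit (n : ℕ) (x : State) : PMF State :=
  (mutate x).map (select n x)

/-- The initial distribution: the three coordinates are independent, each uniform on
`{0, 1, …, s}`. -/
noncomputable def initDist (s : ℕ) : PMF State :=
  (PMF.uniformOfFintype (Fin (s + 1) × Fin (s + 1) × Fin (s + 1))).map
    (fun q => ((q.1 : ℕ), (q.2.1 : ℕ), (q.2.2 : ℕ)))

/-- `alive n step μ0 t x` is the probability that the chain with initial distribution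
`μ0` and transition kernel `step` is in state `x` at time `t` and has not reached a
state of fitness `1` at any time `u ≤ t`; so `∑' x, alive n step μ0 t x = P(T > t)`
where `T` is the first hitting time of `{f = 1}`. -/
noncomputable def alive (n : ℕ) (step : State → PMF State) (μ0 : PMF State) :
    ℕ → State → ℝ≥0∞
  | 0, x => if fitness n x = 1 then 0 else μ0 x
  | t + 1, x => if fitness n x = 1 then 0 else ∑' y, alive n step μ0 t y * step y x

/-- The expected runtime `E[T] = ∑_{t ≥ 0} P(T > t)` of the algorithm, where `T` is
the first `t ≥ 0` with `f(x_t) = 1`. -/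
noncomputable def expectedRuntime (n : ℕ) (step : State → PMF State) (μ0 : PMF State) :
    ℝ≥0∞ :=
  ∑' t : ℕ, ∑' x : State, alive n step μ0 t x

theorem _root_.PMF.tsum_map_mul {α β : Type*} (p : PMF α) (f : α → β)
    (g : β → ℝ≥0∞) : ∑' b, p.map f b * g b = ∑' a, p a * g (f a) := by
  simp_rw [PMF.map_apply, ← ENNReal.tsum_mul_right]
  rw [ENNReal.tsum_comm]
  congr 1; funext a
  simp [ite_mul]

theorem _root_.PMF.tsum_mul_le {α : Type*} (p : PMF α) {g : α → ℝ≥0∞} {c : ℝ≥0∞}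
    (hg : ∀ a, g a ≤ c) : ∑' a, p a * g a ≤ c :=
  calc ∑' a, p a * g a ≤ ∑' a, p a * c :=
        ENNReal.tsum_le_tsum fun a => mul_le_mul_right (hg a) _
    _ = c := by rw [ENNReal.tsum_mul_right, p.tsum_coe, one_mul]

theorem _root_.Finset.sum_add_two_le_card_mul {ι : Type*} [Fintype ι] [DecidableEq ι]
    {g : ι → ℕ} {d : ℕ} (hle : ∀ k, g k ≤ d) {i j : ι} (hij : i ≠ j) (hi : g i < d)
    (hj : g j < d) : ∑ k, g k + 2 ≤ Fintype.card ι * d := by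
  have hpointwise : ∀ k, g k + ((if k = i then 1 else 0) + (if k = j then 1 else 0)) ≤ d := by
    intro k
    have hk := hle k
    rcases eq_or_ne k i with rfl | hki
    · rw [if_pos rfl, if_neg hij]; omega
    rcases eq_or_ne k j with rfl | hkj
    · rw [if_pos rfl, if_neg hki]; omega
    rw [if_neg hki, if_neg hkj]; omega
  simpa [Finset.sum_add_distrib, Finset.sum_ite_eq'] using
    Finset.sum_le_sum fun k (_ : k ∈ Finset.univ) => hpointwise k

section Drift

variable {n : ℕ} {step : State → PMF State} {μ0 : PMF State}

theorem alive_zero_le (x : State) : alive n step μ0 0 x ≤ μ0 x := by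
  rw [alive]; split_ifs <;> simp

theorem alive_succ_le (t : ℕ) (x : State) :
    alive n step μ0 (t + 1) x ≤ ∑' y, alive n step μ0 t y * step y x := by
  rw [alive]; split_ifs <;> simp

theorem alive_eq_zero_of_fitness_eq_one {x : State} (hx : fitness n x = 1) (t : ℕ) :
    alive n step μ0 t x = 0 := by
  cases t <;> simp [alive, hx]

theorem tsum_alive_succ_mul_le (g : State → ℝ≥0∞) (t : ℕ) :
    ∑' x, alive n step μ0 (t + 1) x * g x ≤
      ∑' y, alive n step μ0 t y * ∑' x, step y x * g x :=
  calc ∑' x, alive n step μ0 (t + 1) x * g x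
      ≤ ∑' x, (∑' y, alive n step μ0 t y * step y x) * g x :=
        ENNReal.tsum_le_tsum fun x => mul_le_mul_left (alive_succ_le t x) _
    _ = ∑' y, alive n step μ0 t y * ∑' x, step y x * g x := by
        simp_rw [← ENNReal.tsum_mul_right, ← ENNReal.tsum_mul_left, mul_assoc]
        exact ENNReal.tsum_comm

variable {h : State → ℝ≥0∞} {δ : ℝ≥0∞}

theorem tsum_alive_succ_mul_add_le
    (hdrift : ∀ y, fitness n y ≠ 1 → ∑' x, step y x * h x + δ ≤ h y) (t : ℕ) :
    ∑' x, alive n step μ0 (t + 1) x * h x + δ * ∑' x, alive n step μ0 t x ≤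
      ∑' x, alive n step μ0 t x * h x := by
  grw [tsum_alive_succ_mul_le, ← ENNReal.tsum_mul_left, ← ENNReal.tsum_add]
  refine ENNReal.tsum_le_tsum fun y => ?_
  by_cases hy : fitness n y = 1
  · simp [alive_eq_zero_of_fitness_eq_one hy]
  · calc alive n step μ0 t y * ∑' x, step y x * h x + δ * alive n step μ0 t y
        = alive n step μ0 t y * (∑' x, step y x * h x + δ) := by ring
      _ ≤ alive n step μ0 t y * h y := mul_le_mul_right (hdrift y hy) _

theorem expectedRuntime_le_of_drift
    (hdrift : ∀ y, fitness n y ≠ 1 → ∑' x, step y x * h x + δ ≤ h y) :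
    δ * expectedRuntime n step μ0 ≤ ∑' x, μ0 x * h x := by
  set P : ℕ → ℝ≥0∞ := fun t => ∑' x, alive n step μ0 t x
  set Φ : ℕ → ℝ≥0∞ := fun t => ∑' x, alive n step μ0 t x * h x
  have htelescope : ∀ N, δ * ∑ t ∈ Finset.range N, P t + Φ N ≤ Φ 0 := by
    intro N
    induction N with
    | zero => simp
    | succ N ih =>
      calc δ * ∑ t ∈ Finset.range (N + 1), P t + Φ (N + 1)
          = δ * ∑ t ∈ Finset.range N, P t + (Φ (N + 1) + δ * P N) := by
            rw [Finset.sum_range_succ]; ring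
        _ ≤ δ * ∑ t ∈ Finset.range N, P t + Φ N := by
            gcongr; exact tsum_alive_succ_mul_add_le hdrift N
        _ ≤ Φ 0 := ih
  calc δ * expectedRuntime n step μ0 = ∑' t, δ * P t := ENNReal.tsum_mul_left.symm
    _ ≤ Φ 0 := ENNReal.tsum_le_of_sum_range_le fun N => by
        rw [← Finset.mul_sum]; exact le_of_add_le_left (htelescope N)
    _ ≤ ∑' x, μ0 x * h x := ENNReal.tsum_le_tsum fun x => mul_le_mul_left (alive_zero_le x) _

end Drift

theorem half_sin_two_pi_div_pos {n : ℕ} (hn : 2 < n) :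
    0 < 1 / 2 * Real.sin (2 * Real.pi / n) := by
  have hn' : (2 : ℝ) < n := by exact_mod_cast hn
  have hlt : 2 * Real.pi / n < Real.pi := by
    rw [div_lt_iff₀ (by linarith)]; nlinarith [Real.pi_pos]
  have := Real.sin_pos_of_pos_of_lt_pi (by positivity) hlt
  positivity

theorem half_sin_two_pi_div_lt {n : ℕ} (hn : 0 < n) :
    1 / 2 * Real.sin (2 * Real.pi / n) < Real.pi / n := by
  have := Real.sin_lt (show 0 < 2 * Real.pi / n by positivity)
  linarith [show 1 / 2 * (2 * Real.pi / n) = Real.pi / n by ring]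

def deficit (n : ℕ) (x : State) : ℕ := (n / 2 - x.1) + (n / 4 - x.2.1) + (n / 4 - x.2.2)

theorem deficit_le (n : ℕ) (x : State) : deficit n x ≤ n := by
  simp only [deficit]; omega

def score (n : ℕ) (x : State) : ℕ × ℤ := (iVal n x, jVal n x)

theorem fitness_lt_fitness {n : ℕ} (hn : 2 < n) {x y : State} (h : score n x < score n y) :
    fitness n x < fitness n y := by
  have hA := half_sin_two_pi_div_pos hn
  have hB := half_sin_two_pi_div_lt (n := n) (by omega)
  unfold fitness
  refine mul_lt_mul_of_pos_left ?_ (by positivity [Real.pi_pos])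
  rcases Prod.lt_iff.mp h with ⟨hi, hj⟩ | ⟨hi, hj⟩
  · have hi' : (iVal n x : ℝ) < iVal n y := by exact_mod_cast hi
    have hj' : (jVal n x : ℝ) ≤ jVal n y := by exact_mod_cast hj
    nlinarith
  · have hi' : (iVal n x : ℝ) ≤ iVal n y := by exact_mod_cast hi
    have hj' : (jVal n x : ℝ) < jVal n y := by exact_mod_cast hj
    nlinarith

theorem select_eq_of_score_le {n : ℕ} (hn : 2 < n) {x y : State} (h : score n x ≤ score n y) :
    select n x y = y := by
  refine if_pos ?_
  rcases h.lt_or_eq with hlt | heq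
  · exact (fitness_lt_fitness hn hlt).le
  · simp only [score, Prod.mk.injEq] at heq
    simp only [fitness, heq, le_refl]

theorem score_applyAction_lt_or_deficit_le (n : ℕ) (k : Fin 18) (x : State) :
    score n (applyAction k x) < score n x ∨ deficit n (applyAction k x) ≤ deficit n x := by
  obtain ⟨a, b, c⟩ := x
  fin_cases k <;> simp only [applyAction] <;> (try split) <;>
    simp only [score, Prod.lt_iff, iVal, jVal, deficit] <;> omega

theorem deficit_select_applyAction_le {n : ℕ} (hn : 2 < n) (k : Fin 18) (x : State) :
    deficit n (select n x (applyAction k x)) ≤ deficit n x := by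
  unfold select
  split_ifs with hacc
  · exact (score_applyAction_lt_or_deficit_le n k x).resolve_left
      fun hlt => (fitness_lt_fitness hn hlt).not_ge hacc
  · exact le_rfl

theorem exists_ne_deficit_select_applyAction_lt {n : ℕ} (hn : 2 < n) {x : State}
    (hx : deficit n x ≠ 0) : ∃ k₁ k₂ : Fin 18, k₁ ≠ k₂ ∧
      deficit n (select n x (applyAction k₁ x)) < deficit n x ∧
      deficit n (select n x (applyAction k₂ x)) < deficit n x := by
  obtain ⟨a, b, c⟩ := x
  have improve : ∀ y, score n (a, b, c) ≤ score n y → deficit n y < deficit n (a, b, c) →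
      deficit n (select n (a, b, c) y) < deficit n (a, b, c) := fun y hle hlt => by
    rwa [select_eq_of_score_le hn hle]
  have hdef : a < n / 2 ∨ b < n / 4 ∨ c < n / 4 := by simp only [deficit] at hx; omega
  rcases hdef with h | h | h
  · have hy := improve (a + 1, b, c)
      (by simp only [score, Prod.mk_le_mk, iVal, jVal]; omega) (by simp only [deficit]; omega)
    exact ⟨0, 1, by decide, hy, hy⟩
  · have hy := improve (a, b + 1, c)
      (by simp only [score, Prod.mk_le_mk, iVal, jVal]; omega) (by simp only [deficit]; omega)
    exact ⟨2, 3, by decide, hy, hy⟩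
  · have hy := improve (a, b, c + 1)
      (by simp only [score, Prod.mk_le_mk, iVal, jVal]; omega) (by simp only [deficit]; omega)
    exact ⟨4, 5, by decide, hy, hy⟩

theorem tsum_stepOneBit_mul_deficit_add_le {n : ℕ} (hn : 2 < n) {x : State}
    (hx : deficit n x ≠ 0) :
    ∑' y, stepOneBit n x y * (deficit n y : ℝ≥0∞) + 9⁻¹ ≤ deficit n x := by
  obtain ⟨k₁, k₂, hne, h₁, h₂⟩ := exists_ne_deficit_select_applyAction_lt hn hx
  have hsum := Finset.sum_add_two_le_card_mul (deficit_select_applyAction_le hn · x) hne h₁ h₂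
  rw [Fintype.card_fin] at hsum
  have hinv : (18 : ℝ≥0∞)⁻¹ * 2 = 9⁻¹ := by
    rw [show (18 : ℝ≥0∞) = 2 * 9 by norm_num, ENNReal.mul_inv (by simp) (by simp), mul_comm,
      ← mul_assoc, ENNReal.mul_inv_cancel (by simp) (by simp), one_mul]
  rw [stepOneBit, mutate, PMF.map_comp, PMF.tsum_map_mul, tsum_fintype]
  simp only [PMF.uniformOfFintype_apply, Fintype.card_fin, Nat.cast_ofNat, Function.comp_apply]
  calc ∑ k, (18 : ℝ≥0∞)⁻¹ * deficit n (select n x (applyAction k x)) + 9⁻¹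
      = 18⁻¹ * ((∑ k, deficit n (select n x (applyAction k x)) + 2 : ℕ) : ℝ≥0∞) := by
        push_cast; rw [mul_add, hinv, Finset.mul_sum]
    _ ≤ deficit n x :=
        (ENNReal.inv_mul_le_iff (by norm_num) (by norm_num)).2 (by exact_mod_cast hsum)

theorem fitness_eq_one_of_deficit_eq_zero {n : ℕ} (hn : 0 < n) (hn4 : 4 ∣ n) {x : State}
    (hx : deficit n x = 0) : fitness n x = 1 := by
  obtain ⟨m, rfl⟩ := hn4
  have hi : iVal (4 * m) x = 2 * m := by simp only [iVal, deficit] at *; omega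
  have hj : jVal (4 * m) x = 3 * m := by simp only [jVal, deficit] at *; omega
  have hm : (m : ℝ) ≠ 0 := by exact_mod_cast (show m ≠ 0 by omega)
  rw [fitness, hi, hj]
  push_cast
  field_simp [Real.pi_ne_zero]
  ring

theorem onebit_upper_bound_general (n : ℕ) (hn : 8 ≤ n) (hn4 : 4 ∣ n) (s : ℕ) :
    expectedRuntime n (stepOneBit n) (initDist s) ≤ 63 * (n : ℝ≥0∞) / 4 := by
  have hdrift : ∀ y, fitness n y ≠ 1 →
      ∑' x, stepOneBit n y x * (deficit n x : ℝ≥0∞) + 9⁻¹ ≤ deficit n y := fun y hy =>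
    tsum_stepOneBit_mul_deficit_add_le (by omega) fun h0 =>
      hy (fitness_eq_one_of_deficit_eq_zero (by omega) hn4 h0)
  have hbound : 9⁻¹ * expectedRuntime n (stepOneBit n) (initDist s) ≤ n :=
    (expectedRuntime_le_of_drift hdrift).trans
      ((initDist s).tsum_mul_le fun x => by exact_mod_cast deficit_le n x)
  rw [ENNReal.inv_mul_le_iff (by norm_num) (by norm_num)] at hbound
  refine hbound.trans ?_
  rw [ENNReal.le_div_iff_mul_le (by norm_num) (by norm_num), mul_right_comm]
  gcongr
  norm_num

/-- for every positive integer `s`, the (1+1)-ENAS algorithm with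
one-bit mutation and initial bound `s` finds an optimum of the UNIFORM problem in
expected runtime at most `63n/4`. -/
theorem onebit_upper_bound (n : ℕ) (hn : 8 ≤ n) (hn4 : 4 ∣ n) (s : ℕ) (hs : 0 < s) :
    expectedRuntime n (stepOneBit n) (initDist s) ≤ 63 * (n : ℝ≥0∞) / 4 :=
  onebit_upper_bound_general n hn hn4 s

end ENAS
end

section
/- There exist constants C > 0 and n₀ such that for every integer n ≥ n₀ divisible by 4, the (1+1)-ENAS algorithm with one-bit mutation and initial bound s = n/4 has expected runtime E[T] ≥ C·log n on the UNIFORM problem. -/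
/-!
Runtime analysis of the (1+1)-ENAS algorithm on the UNIFORM problem.

A neural architecture is a triple `x = (n_A, n_B, n_C) ∈ ℕ³`.  With `a = n/2`,
`b = c = n/4`, `A = (1/2)·sin(2π/n)`, `B = π/n − A`, the fitness is
`f(x) = (1/π)·((n/2 + i(x))·A + (n/4 + j(x))·B)` where
`i(x) = min(n_B, b) + min(n_C, c)` and
`j(x) = min(n_A, a) + min(n_B, b) − max(0, min(n_B − b, c − n_C))` (in ℤ).

One-bit mutation chooses uniformly among nine actions (three increments with
probability 1/9 each, three guarded decrements with probability 1/9 each and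
six guarded modifications with probability 1/18 each); we realize this as the
push-forward of the uniform distribution on `Fin 18`.

The (1+1)-ENAS Markov chain starts from a state whose coordinates are
independent uniform on `{0,…,s}` and repeatedly applies mutation followed by
elitist selection.  The expected runtime `E[T]`, where `T` is the first `t`
with `f(x_t) = 1`, is expressed as `∑_{t≥0} P(T > t)`, where
`P(T > t) = ∑_x alive t x` and `alive t x` is the probability that the chain
is in state `x` at time `t` without having reached fitness `1` at any time
`u ≤ t`.
-/

namespace ENAS

open scoped ENNReal

/-! The fitness equals `1` only if `n_A ≥ n/2`. Initially `n_A ≤ n/4`, and one generation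
raises `n_A` by at most one, so the chain survives its first `n/4` generations almost surely and
`E[T] ≥ n/4 ≥ (log n)/4`. -/

section SpeedLimit

variable {n : ℕ} {step : State → PMF State} {μ0 : PMF State} {φ : State → ℕ} {s K : ℕ}
  (hinit : ∀ x, μ0 x ≠ 0 → φ x ≤ s) (hstep : ∀ y x, step y x ≠ 0 → φ x ≤ φ y + 1)
  (htarget : ∀ x, fitness n x = 1 → K ≤ φ x)

include hinit hstep in
lemma le_of_alive_ne_zero (t : ℕ) {x : State} (hx : alive n step μ0 t x ≠ 0) :
    φ x ≤ s + t := by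
  induction t generalizing x with
  | zero =>
    simp only [alive] at hx
    split_ifs at hx
    · exact absurd rfl hx
    · exact hinit x hx
  | succ t ih =>
    simp only [alive] at hx
    split_ifs at hx
    · exact absurd rfl hx
    obtain ⟨y, hy⟩ := not_forall.mp (mt ENNReal.tsum_eq_zero.mpr hx)
    obtain ⟨hy_alive, hy_step⟩ := mul_ne_zero_iff.mp hy
    have := ih hy_alive
    have := hstep y x hy_step
    omega

include hinit htarget in
lemma alive_zero_eq (hs : s < K) (x : State) : alive n step μ0 0 x = μ0 x := by
  rw [alive, ite_eq_right_iff]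
  intro hx
  by_contra h
  have := hinit x (Ne.symm h)
  have := htarget x hx
  omega

include hinit hstep htarget in
lemma alive_succ_eq {t : ℕ} (ht : s + t + 1 < K) (x : State) :
    alive n step μ0 (t + 1) x = ∑' y, alive n step μ0 t y * step y x := by
  rw [alive, ite_eq_right_iff]
  intro hx
  refine (ENNReal.tsum_eq_zero.mpr fun y => ?_).symm
  by_contra h
  obtain ⟨hy_alive, hy_step⟩ := mul_ne_zero_iff.mp h
  have := le_of_alive_ne_zero hinit hstep t hy_alive
  have := hstep y x hy_step
  have := htarget x hx
  omega

include hinit hstep htarget in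
lemma tsum_alive_eq_one {t : ℕ} (ht : s + t < K) : ∑' x, alive n step μ0 t x = 1 := by
  induction t with
  | zero => simp only [alive_zero_eq hinit htarget (by omega), PMF.tsum_coe]
  | succ t ih =>
    calc ∑' x, alive n step μ0 (t + 1) x
        = ∑' y, alive n step μ0 t y * ∑' x, step y x := by
          rw [tsum_congr (alive_succ_eq hinit hstep htarget (by omega)), ENNReal.tsum_comm]
          simp only [ENNReal.tsum_mul_left]
      _ = 1 := by simp only [PMF.tsum_coe, mul_one, ih (by omega)]

include hinit hstep htarget in
lemma le_expectedRuntime : ((K - s : ℕ) : ℝ≥0∞) ≤ expectedRuntime n step μ0 := by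
  calc ((K - s : ℕ) : ℝ≥0∞)
      = ∑ t ∈ Finset.range (K - s), ∑' x, alive n step μ0 t x := by
        rw [Finset.sum_congr rfl fun t ht =>
          tsum_alive_eq_one hinit hstep htarget (by rw [Finset.mem_range] at ht; omega)]
        simp
    _ ≤ expectedRuntime n step μ0 := ENNReal.sum_le_tsum _

end SpeedLimit

lemma iVal_le (n : ℕ) (x : State) : iVal n x ≤ 2 * (n / 4) := by
  unfold iVal
  omega

lemma jVal_le (n : ℕ) (x : State) : jVal n x ≤ x.1 + (n : ℤ) / 4 := by
  unfold jVal
  omega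

/-- With `θ = π/n` we have `A + B = θ` and `A, B > 0`, so `(n/2 + i)·A + (n/4 + j)·B < nθ = π`
once `i ≤ n/2` and `j < 3n/4`. -/
lemma fitness_lt_one {m : ℕ} (hm : 0 < m) {x : State} (hx : x.1 < 2 * m) :
    fitness (4 * m) x < 1 := by
  set θ := Real.pi / (4 * m) with hθ
  have hθ_pos : 0 < θ := by positivity
  have hθ_lt : 2 * θ < Real.pi := by
    have : (1 : ℝ) ≤ m := by exact_mod_cast hm
    rw [hθ, ← mul_div_assoc, div_lt_iff₀ (by positivity)]
    nlinarith [Real.pi_pos]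
  have hA : 0 < Real.sin (2 * θ) := Real.sin_pos_of_pos_of_lt_pi (by positivity) hθ_lt
  have hB : Real.sin (2 * θ) < 2 * θ := Real.sin_lt (by positivity)
  have hi : (iVal (4 * m) x : ℝ) ≤ 2 * m := by
    exact_mod_cast (iVal_le (4 * m) x).trans (by omega)
  have hj : (jVal (4 * m) x : ℝ) ≤ 3 * m - 1 := by
    have h := jVal_le (4 * m) x
    have : jVal (4 * m) x ≤ 3 * m - 1 := by push_cast at h; omega
    exact_mod_cast this
  have hπ : Real.pi = 4 * m * θ := by rw [hθ]; field_simp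
  have h2θ : 2 * Real.pi / ((4 * m : ℕ) : ℝ) = 2 * θ := by push_cast; ring
  have hθ' : Real.pi / ((4 * m : ℕ) : ℝ) = θ := by push_cast; ring
  rw [fitness, h2θ, hθ', one_div_mul_eq_div, div_lt_one Real.pi_pos]
  push_cast
  rw [hπ]
  nlinarith [mul_le_mul_of_nonneg_right hi hA.le,
    mul_le_mul_of_nonneg_right hj (sub_pos.2 hB).le]

lemma two_mul_le_fst_of_fitness_eq_one {m : ℕ} (hm : 0 < m) {x : State}
    (h : fitness (4 * m) x = 1) : 2 * m ≤ x.1 := by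
  by_contra! hx
  exact (fitness_lt_one hm hx).ne h

lemma applyAction_fst_le (k : Fin 18) (x : State) : (applyAction k x).1 ≤ x.1 + 1 := by
  obtain ⟨a, b, c⟩ := x
  fin_cases k <;> simp only [applyAction] <;> (try split_ifs) <;> (try dsimp only) <;> omega

lemma stepOneBit_fst_le {n : ℕ} {y x : State} (h : stepOneBit n y x ≠ 0) :
    x.1 ≤ y.1 + 1 := by
  rw [stepOneBit, ← PMF.mem_support_iff, PMF.support_map] at h
  obtain ⟨z, hz, rfl⟩ := h
  rw [mutate, PMF.support_map] at hz
  obtain ⟨k, -, rfl⟩ := hz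
  unfold select
  split_ifs
  · exact applyAction_fst_le k y
  · omega

lemma initDist_fst_le {s : ℕ} {x : State} (h : initDist s x ≠ 0) : x.1 ≤ s := by
  rw [initDist, ← PMF.mem_support_iff, PMF.support_map] at h
  obtain ⟨q, -, rfl⟩ := h
  exact Nat.lt_succ_iff.mp q.1.isLt

/-- there exist constants `C > 0` and `n₀` such that for every
integer `n ≥ n₀` divisible by `4`, the (1+1)-ENAS algorithm with one-bit mutation
and initial bound `s = n/4` has expected runtime at least `C·log n` on the UNIFORM
problem. -/
theorem onebit_lower_bound :
    ∃ C : ℝ, 0 < C ∧ ∃ n₀ : ℕ, ∀ n : ℕ, n₀ ≤ n → 4 ∣ n →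
      ENNReal.ofReal (C * Real.log n) ≤
        expectedRuntime n (stepOneBit n) (initDist (n / 4)) := by
  refine ⟨1 / 4, by norm_num, 4, fun n hn ⟨m, hnm⟩ => ?_⟩
  subst hnm
  have hm : 0 < m := by omega
  have hT : ((2 * m - m : ℕ) : ℝ≥0∞) ≤
      expectedRuntime (4 * m) (stepOneBit (4 * m)) (initDist m) :=
    le_expectedRuntime (φ := Prod.fst) (fun _ => initDist_fst_le) (fun _ _ => stepOneBit_fst_le)
      (fun _ => two_mul_le_fst_of_fitness_eq_one hm)
  rw [show 2 * m - m = m by omega] at hT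
  rw [Nat.mul_div_cancel_left m four_pos]
  refine le_trans ?_ hT
  rw [← ENNReal.ofReal_natCast]
  refine ENNReal.ofReal_le_ofReal ?_
  have := Real.log_le_self (Nat.cast_nonneg (α := ℝ) (4 * m))
  push_cast at this ⊢
  linarith

end ENAS
end

section
/- For every real number x ≥ 6, it holds that (3x/4)·(π/x − (1/2)·sin(2π/x)) < (1/2)·sin(2π/x). -/
/-!
With `t = 2π/x ∈ (0, π/3]` the inequality reads `3π (t - sin t) < 2 t sin t`. The cubic Taylor
bound `t - t³/6 ≤ sin t` is slightly too weak near `t = π/3`, but applied at the half angle,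
together with `1 - u²/2 ≤ cos u`, it gives `t (1 - t²/24) (1 - t²/8) ≤ sin t`, which leaves a
polynomial inequality in `t` and `π` that `π < 3.15` settles.
-/

open Real

theorem mul_one_sub_sq_div_mul_le_sin {t : ℝ} (ht₀ : 0 ≤ t) (ht : t ^ 2 ≤ 8) :
    t * ((1 - t ^ 2 / 24) * (1 - t ^ 2 / 8)) ≤ sin t := by
  have hsin : t / 2 - (t / 2) ^ 3 / 6 ≤ sin (t / 2) := sin_ge_sub_cube (by positivity)
  have hcos : 1 - (t / 2) ^ 2 / 2 ≤ cos (t / 2) := one_sub_sq_div_two_le_cos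
  have hsin₀ : 0 ≤ t / 2 - (t / 2) ^ 3 / 6 := by nlinarith
  have hcos₀ : 0 ≤ 1 - (t / 2) ^ 2 / 2 := by linarith
  calc t * ((1 - t ^ 2 / 24) * (1 - t ^ 2 / 8))
      = 2 * (t / 2 - (t / 2) ^ 3 / 6) * (1 - (t / 2) ^ 2 / 2) := by ring
    _ ≤ 2 * sin (t / 2) * cos (t / 2) := by gcongr; linarith
    _ = sin t := by rw [← sin_two_mul]; ring_nf

theorem three_mul_pi_mul_sub_sin_lt {t : ℝ} (ht₀ : 0 < t) (ht : t ≤ π / 3) :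
    3 * π * (t - sin t) < 2 * t * sin t := by
  have hπ : π < 3.15 := pi_lt_d2
  have ht₁ : t ≤ 1.05 := by linarith
  have ht₂ : t ^ 2 ≤ 1.1025 := by nlinarith
  obtain ⟨q, hq_def⟩ : ∃ q, q = (1 - t ^ 2 / 24) * (1 - t ^ 2 / 8) := ⟨_, rfl⟩
  have hs : t * q ≤ sin t := hq_def ▸ mul_one_sub_sq_div_mul_le_sin ht₀.le (by linarith)
  have hq : 0 ≤ q := by rw [hq_def]; apply mul_nonneg <;> linarith
  have hq₁ : 0 ≤ 1 - q := by rw [hq_def]; nlinarith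
  have hpoly : 3 * π * (1 - q) < 2 * t * q := by
    have hpoly₀ : 9.45 * (1 - q) < 2 * t * q := by
      rw [hq_def]
      nlinarith [mul_pos ht₀ ht₀, pow_pos ht₀ 3, pow_pos ht₀ 4, pow_pos ht₀ 5]
    nlinarith [mul_le_mul_of_nonneg_right hπ.le hq₁]
  calc 3 * π * (t - sin t) ≤ 3 * π * (t - t * q) := by gcongr
    _ = t * (3 * π * (1 - q)) := by ring
    _ < t * (2 * t * q) := by gcongr
    _ = 2 * t * (t * q) := by ring
    _ ≤ 2 * t * sin t := by gcongr

/-- for every real `x ≥ 6`,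
`(3x/4)·(π/x − (1/2)·sin(2π/x)) < (1/2)·sin(2π/x)`; i.e., the total fitness gain
from correctly classifying all `3n/4` segment regions of the UNIFORM problem is
strictly smaller than the gain from a single triangular region. -/
theorem segment_gain_lt_triangle_gain (x : ℝ) (hx : 6 ≤ x) :
    3 * x / 4 * (π / x - 1 / 2 * Real.sin (2 * π / x)) <
      1 / 2 * Real.sin (2 * π / x) := by
  have hx₀ : 0 < x := by linarith
  obtain ⟨t, ht_def⟩ : ∃ t, t = 2 * π / x := ⟨_, rfl⟩
  have ht₀ : 0 < t := by rw [ht_def]; positivity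
  have hxt : x * t = 2 * π := by rw [ht_def]; field_simp
  have key := three_mul_pi_mul_sub_sin_lt ht₀
    (by rw [ht_def, div_le_div_iff₀ hx₀ (by norm_num)]; nlinarith [pi_pos])
  have hπx : π / x = t / 2 := by rw [ht_def]; ring
  rw [hπx, ← ht_def]
  refine lt_of_mul_lt_mul_left ?_ ht₀.le
  linear_combination key / 4 + 3 / 8 * (t - sin t) * hxt
end

section
/- For all integers i, i' with 0 ≤ i, i' ≤ n/2 and all integers j, j' with 0 ≤ j, j' ≤ 3n/4, it holds that F(i, j) < F(i', j') if and only if i < i', or i = i' and j < j'. In particular, F is strictly increasing in the lexicographic order on (i, j), so the solution subspaces ordered by (i, j) are strictly ordered by fitness. -/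
open Real

/-! With `x = 2π/n` we have `A = (sin x)/2 > 0` and `B = (x - sin x)/2 > 0`, and `F(i, j)` is
`i A + j B` up to a constant. This is lexicographic on `0 ≤ j ≤ 3n/4` as soon as the largest
possible `j`-contribution `(3n/4) B` stays below the unit step `A` in `i`; after multiplying by
`x` this reads `3π (x - sin x) < 2x sin x`, which for `x ≤ π/4` (that is, `n ≥ 8`) follows from
`x - x³/6 < sin x`. -/

section LexOrder

variable {A B M : ℝ}

theorem add_mul_lt_add_mul_of_lt (hA : 0 ≤ A) (hB : 0 ≤ B) (hMB : M * B < A) {i i' j j' : ℤ}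
    (hii' : i < i') (hj : (j : ℝ) ≤ M) (hj'0 : 0 ≤ j') :
    i * A + j * B < i' * A + j' * B := by
  have hi : (i : ℝ) + 1 ≤ i' := by exact_mod_cast hii'
  have hj'B : (0 : ℝ) ≤ j' * B := mul_nonneg (by exact_mod_cast hj'0) hB
  nlinarith [mul_le_mul_of_nonneg_right hj hB, mul_le_mul_of_nonneg_right hi hA]

theorem add_mul_lt_add_mul_iff_lex (hB : 0 < B) (hMB : M * B < A) {i i' j j' : ℤ}
    (hj0 : 0 ≤ j) (hj : (j : ℝ) ≤ M) (hj'0 : 0 ≤ j') (hj' : (j' : ℝ) ≤ M) :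
    i * A + j * B < i' * A + j' * B ↔ i < i' ∨ (i = i' ∧ j < j') := by
  have hA : 0 ≤ A := (mul_nonneg ((Int.cast_nonneg hj0).trans hj) hB.le).trans hMB.le
  constructor
  · intro h
    rcases lt_trichotomy i i' with hlt | rfl | hgt
    · exact Or.inl hlt
    · have hjB : (j : ℝ) * B < j' * B := by linarith
      exact Or.inr ⟨rfl, by exact_mod_cast lt_of_mul_lt_mul_right hjB hB.le⟩
    · exact absurd h (add_mul_lt_add_mul_of_lt hA hB.le hMB hgt hj' hj0).not_gt
  · rintro (hlt | ⟨rfl, hjj'⟩)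
    · exact add_mul_lt_add_mul_of_lt hA hB.le hMB hlt hj hj'0
    · have : (j : ℝ) < j' := by exact_mod_cast hjj'
      gcongr

end LexOrder

theorem three_pi_mul_sub_sin_lt {x : ℝ} (hx0 : 0 < x) (hx : x ≤ π / 4) :
    3 * π * (x - sin x) < 2 * x * sin x := by
  have hsin := sin_gt_sub_cube hx0
  have hpoly : π * x / 2 + x ^ 2 / 3 ≤ 2 := by nlinarith [pi_lt_d2, pi_pos]
  calc 3 * π * (x - sin x) < 3 * π * (x ^ 3 / 6) := by gcongr; linarith
    _ ≤ 2 * x * (x - x ^ 3 / 6) := by nlinarith [sq_nonneg x]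
    _ < 2 * x * sin x := by gcongr

theorem fitness_gap {n : ℝ} (hn : 8 ≤ n) :
    3 * n / 4 * (π / n - 1 / 2 * sin (2 * π / n)) < 1 / 2 * sin (2 * π / n) := by
  set x := 2 * π / n with hx
  have hn0 : 0 < n := by linarith
  have hx0 : 0 < x := by positivity
  have hx4 : x ≤ π / 4 := calc
    x ≤ 2 * π / 8 := div_le_div_of_nonneg_left (by positivity) (by norm_num) hn
    _ = π / 4 := by ring
  have hnx : n * x = 2 * π := by rw [hx]; field_simp
  have hpin : π / n = x / 2 := by rw [hx]; ring
  rw [hpin, ← mul_lt_mul_iff_right₀ hx0]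
  linear_combination (1 / 4) * three_pi_mul_sub_sin_lt hx0 hx4 + (3 * (x - sin x) / 8) * hnx

theorem fitness_lex_order_general (n : ℕ) (hn : 8 ≤ n)
    (A B : ℝ) (hA : A = 1 / 2 * Real.sin (2 * π / n)) (hB : B = π / n - A)
    (F : ℤ → ℤ → ℝ) (hF : ∀ i j : ℤ, F i j = ((n : ℝ) / 2 + i) * A + ((n : ℝ) / 4 + j) * B)
    (i i' j j' : ℤ) (hj0 : 0 ≤ j) (hj : j ≤ 3 * (n : ℤ) / 4)
    (hj'0 : 0 ≤ j') (hj' : j' ≤ 3 * (n : ℤ) / 4) :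
    F i j < F i' j' ↔ i < i' ∨ (i = i' ∧ j < j') := by
  have hnR : (8 : ℝ) ≤ n := by exact_mod_cast hn
  have hx0 : 0 < 2 * π / n := by positivity
  have hB0 : 0 < B := by
    rw [hB, hA]
    linarith [sin_lt hx0, show π / n = 1 / 2 * (2 * π / n) by ring]
  have hMB : 3 * (n : ℝ) / 4 * B < A := by
    rw [hB, hA]
    exact fitness_gap hnR
  have real_bound {k : ℤ} (hk : k ≤ 3 * (n : ℤ) / 4) : (k : ℝ) ≤ 3 * n / 4 := by
    have : (4 * k : ℝ) ≤ 3 * n := by exact_mod_cast (by omega : 4 * k ≤ 3 * (n : ℤ))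
    linarith
  rw [hF, hF, ← add_mul_lt_add_mul_iff_lex hB0 hMB hj0 (real_bound hj) hj'0 (real_bound hj')]
  constructor <;> intro h <;> linarith

/-- with `A = (1/2)·sin(2π/n)`, `B = π/n − A` and
`F(i, j) = (n/2 + i)·A + (n/4 + j)·B`, for all integers `0 ≤ i, i' ≤ n/2` and
`0 ≤ j, j' ≤ 3n/4` we have `F(i, j) < F(i', j')` iff `(i, j) <_lex (i', j')`:
the solution subspaces ordered by `(i, j)` are strictly ordered by fitness. -/
theorem fitness_lex_order (n : ℕ) (hn : 8 ≤ n) (hn4 : 4 ∣ n)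
    (A B : ℝ) (hA : A = 1 / 2 * Real.sin (2 * π / n)) (hB : B = π / n - A)
    (F : ℤ → ℤ → ℝ) (hF : ∀ i j : ℤ, F i j = ((n : ℝ) / 2 + i) * A + ((n : ℝ) / 4 + j) * B)
    (i i' j j' : ℤ) (hi0 : 0 ≤ i) (hi : i ≤ (n : ℤ) / 2) (hi'0 : 0 ≤ i')
    (hi' : i' ≤ (n : ℤ) / 2) (hj0 : 0 ≤ j) (hj : j ≤ 3 * (n : ℤ) / 4)
    (hj'0 : 0 ≤ j') (hj' : j' ≤ 3 * (n : ℤ) / 4) :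
    F i j < F i' j' ↔ i < i' ∨ (i = i' ∧ j < j') :=
  fitness_lex_order_general n hn A B hA hB F hF i i' j j' hj0 hj hj'0 hj'
end

section
/- For every architecture x = (n_A, n_B, n_C) ∈ ℕ³, the fitness satisfies f(x) ≤ 1; moreover f(x) = 1 if and only if n_A ≥ n/2, n_B ≥ n/4, and n_C ≥ n/4. -/
namespace ENAS

/-!
`A = ½ sin(2π/n)` is the area of the triangle spanned by the centre of the unit disc and one side
of the inscribed regular `n`-gon, and `B = π/n − A` is the area of the circular segment cut off by
that side, so `n (A + B) = π`. Hence `π (1 − f(x)) = (n/2 − i(x)) A + (3n/4 − j(x)) B`, where both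
weights are positive and both deficits are nonnegative: `f ≤ 1`, with equality exactly when `i` and
`j` reach their maxima, which for `4 ∣ n` means `n_A ≥ n/2`, `n_B ≥ n/4` and `n_C ≥ n/4`.
-/

open Real

noncomputable def triangleArea (n : ℕ) : ℝ := 1 / 2 * sin (2 * π / n)

noncomputable def segmentArea (n : ℕ) : ℝ := π / n - triangleArea n

theorem triangleArea_pos {n : ℕ} (hn : 2 < n) : 0 < triangleArea n := by
  have hn' : (2 : ℝ) < n := by exact_mod_cast hn
  have hlt : 2 * π / n < π := by
    rw [div_lt_iff₀ (by linarith)]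
    nlinarith [pi_pos]
  exact mul_pos (by norm_num) (sin_pos_of_pos_of_lt_pi (by positivity) hlt)

theorem segmentArea_pos {n : ℕ} (hn : n ≠ 0) : 0 < segmentArea n := by
  have hsin := sin_lt (x := 2 * π / n) (by positivity)
  have hangle : 2 * π / n = 2 * (π / n) := by ring
  unfold segmentArea triangleArea
  linarith

theorem two_mul_iVal_le (n : ℕ) (x : State) : 2 * iVal n x ≤ n := by
  unfold iVal
  omega

theorem four_mul_jVal_le (n : ℕ) (x : State) : 4 * jVal n x ≤ 3 * n := by
  unfold jVal
  omega

theorem two_mul_iVal_eq_and_four_mul_jVal_eq_iff {n : ℕ} (hn : 4 ∣ n) (x : State) :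
    2 * iVal n x = n ∧ 4 * jVal n x = 3 * n ↔
      n / 2 ≤ x.1 ∧ n / 4 ≤ x.2.1 ∧ n / 4 ≤ x.2.2 := by
  unfold iVal jVal
  omega

theorem one_sub_fitness {n : ℕ} (hn : n ≠ 0) (x : State) :
    1 - fitness n x = ((n / 2 - iVal n x) * triangleArea n +
      (3 * n / 4 - jVal n x) * segmentArea n) / π := by
  have hfitness : fitness n x = ((n / 2 + iVal n x) * triangleArea n +
      (n / 4 + jVal n x) * segmentArea n) / π := by
    rw [fitness, one_div_mul_eq_div]
    rfl
  rw [hfitness, segmentArea]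
  field_simp
  ring

theorem fitness_le_one_and_eq_one_iff_of_two_lt {n : ℕ} (hn : 2 < n) (x : State) :
    fitness n x ≤ 1 ∧ (fitness n x = 1 ↔ 2 * iVal n x = n ∧ 4 * jVal n x = 3 * n) := by
  have hi : 0 ≤ (n : ℝ) / 2 - iVal n x := by
    have : (2 * iVal n x : ℝ) ≤ n := by exact_mod_cast two_mul_iVal_le n x
    linarith
  have hj : 0 ≤ 3 * (n : ℝ) / 4 - jVal n x := by
    have : (4 * jVal n x : ℝ) ≤ 3 * n := by exact_mod_cast four_mul_jVal_le n x
    linarith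
  have hT := triangleArea_pos hn
  have hS := segmentArea_pos (n := n) (by omega)
  have hiT := mul_nonneg hi hT.le
  have hjS := mul_nonneg hj hS.le
  have hdeficit := one_sub_fitness (n := n) (by omega) x
  have hdeficit_nonneg : 0 ≤ 1 - fitness n x := by
    rw [hdeficit]
    exact div_nonneg (add_nonneg hiT hjS) pi_pos.le
  refine ⟨by linarith, ?_⟩
  rw [eq_comm, ← sub_eq_zero, hdeficit, div_eq_zero_iff, or_iff_left pi_ne_zero,
    add_eq_zero_iff_of_nonneg hiT hjS, mul_eq_zero, mul_eq_zero,
    or_iff_left hT.ne', or_iff_left hS.ne', ← @Nat.cast_inj ℝ, ← @Int.cast_inj ℝ]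
  push_cast
  constructor <;> rintro ⟨h₁, h₂⟩ <;> constructor <;> linarith

/-- for every architecture `x = (n_A, n_B, n_C) ∈ ℕ³` the fitness
satisfies `f(x) ≤ 1`, and `f(x) = 1` iff `n_A ≥ n/2`, `n_B ≥ n/4` and `n_C ≥ n/4`. -/
theorem fitness_le_one_and_eq_one_iff (n : ℕ) (hn : 8 ≤ n) (hn4 : 4 ∣ n) (x : State) :
    fitness n x ≤ 1 ∧
      (fitness n x = 1 ↔ n / 2 ≤ x.1 ∧ n / 4 ≤ x.2.1 ∧ n / 4 ≤ x.2.2) := by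
  rw [← two_mul_iVal_eq_and_four_mul_jVal_eq_iff hn4]
  exact fitness_le_one_and_eq_one_iff_of_two_lt (by omega) x

end ENAS
end
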